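/- arXiv:math/0503435 — 5 statements merged into one kernel-verified Lean document; each statement's English description precedes it below -/
import Mathlib

section
/- The 4×4 matrix R = (1/√2)·[[1,0,0,1],[0,1,-1,0],[0,1,1,0],[-1,0,0,1]] satisfies the Yang–Baxter equation (R⊗I₂)(I₂⊗R)(R⊗I₂) = (I₂⊗R)(R⊗I₂)(I₂⊗R). -/
open Matrix Complex

/-- The 4×4 matrix `R = (1/√2)·[[1,0,0,1],[0,1,-1,0],[0,1,1,0],[-1,0,0,1]]`. -/
noncomputable def R4 : Matrix (Fin 4) (Fin 4) ℂ :=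
  ((Real.sqrt 2 : ℝ) : ℂ)⁻¹ • !![1, 0, 0, 1; 0, 1, -1, 0; 0, 1, 1, 0; -1, 0, 0, 1]

/-- `R` as a matrix on `ℂ² ⊗ ℂ²`, indexed by pairs; `p.1` is the first tensor
factor (the paper's basis ordering makes the second factor the major index). -/
noncomputable def R : Matrix (Fin 2 × Fin 2) (Fin 2 × Fin 2) ℂ := fun p q =>
  R4 ⟨p.1.val + 2 * p.2.val, by have := p.1.isLt; have := p.2.isLt; omega⟩
     ⟨q.1.val + 2 * q.2.val, by have := q.1.isLt; have := q.2.isLt; omega⟩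

/-- The operator `I₂^{⊗ i} ⊗ M ⊗ I₂^{⊗ (n-i-2)}` acting on `(ℂ²)^{⊗ n}`
(0-indexed: `M` acts on tensor factors `i` and `i+1`). -/
noncomputable def pairOp (n i : ℕ) (M : Matrix (Fin 2 × Fin 2) (Fin 2 × Fin 2) ℂ) :
    Matrix (Fin n → Fin 2) (Fin n → Fin 2) ℂ :=
  if h : i + 1 < n then fun x y =>
    M (x ⟨i, Nat.lt_of_succ_lt h⟩, x ⟨i + 1, h⟩) (y ⟨i, Nat.lt_of_succ_lt h⟩, y ⟨i + 1, h⟩) *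
      ∏ j : Fin n, if (j : ℕ) = i ∨ (j : ℕ) = i + 1 then 1 else if x j = y j then 1 else 0
  else 0

/-!
`R` is `1/√2` times an integer matrix. The Yang–Baxter equation is homogeneous of degree three in
the matrix and is preserved by ring homomorphisms, so it suffices to verify it for the integer
matrix, where it is a finite computation with 8×8 integer matrices that the kernel decides.
-/

section AdjacentOp

variable {α β : Type*} [CommRing α] [CommRing β] {d : ℕ}

noncomputable def adjacentOp (n i : ℕ) (M : Matrix (Fin d × Fin d) (Fin d × Fin d) α) :
    Matrix (Fin n → Fin d) (Fin n → Fin d) α :=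
  if h : i + 1 < n then Matrix.of fun x y =>
    M (x ⟨i, Nat.lt_of_succ_lt h⟩, x ⟨i + 1, h⟩) (y ⟨i, Nat.lt_of_succ_lt h⟩, y ⟨i + 1, h⟩) *
      ∏ j : Fin n, if (j : ℕ) = i ∨ (j : ℕ) = i + 1 then 1 else if x j = y j then 1 else 0
  else 0

theorem pairOp_eq_adjacentOp (n i : ℕ) (M : Matrix (Fin 2 × Fin 2) (Fin 2 × Fin 2) ℂ) :
    pairOp n i M = adjacentOp n i M := rfl

theorem adjacentOp_smul (n i : ℕ) (c : α) (M : Matrix (Fin d × Fin d) (Fin d × Fin d) α) :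
    adjacentOp n i (c • M) = c • adjacentOp n i M := by
  unfold adjacentOp
  by_cases h : i + 1 < n
  · rw [dif_pos h, dif_pos h]
    ext x y
    simp only [Matrix.of_apply, Matrix.smul_apply, smul_eq_mul, mul_assoc]
  · rw [dif_neg h, dif_neg h, smul_zero]

theorem adjacentOp_map (n i : ℕ) (f : α →+* β) (M : Matrix (Fin d × Fin d) (Fin d × Fin d) α) :
    adjacentOp n i (M.map f) = (adjacentOp n i M).map f := by
  unfold adjacentOp
  by_cases h : i + 1 < n
  · rw [dif_pos h, dif_pos h]
    ext x y
    simp only [Matrix.of_apply, Matrix.map_apply, map_mul, map_prod, apply_ite f, map_one, map_zero]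
  · rw [dif_neg h, dif_neg h, Matrix.map_zero _ (map_zero f)]

def IsYangBaxter (M : Matrix (Fin d × Fin d) (Fin d × Fin d) α) : Prop :=
  adjacentOp 3 0 M * adjacentOp 3 1 M * adjacentOp 3 0 M =
    adjacentOp 3 1 M * adjacentOp 3 0 M * adjacentOp 3 1 M

theorem IsYangBaxter.smul {M : Matrix (Fin d × Fin d) (Fin d × Fin d) α} (hM : IsYangBaxter M)
    (c : α) : IsYangBaxter (c • M) := by
  rw [IsYangBaxter] at hM ⊢
  simp only [adjacentOp_smul, smul_mul_smul_comm, hM]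

theorem IsYangBaxter.map {M : Matrix (Fin d × Fin d) (Fin d × Fin d) α} (hM : IsYangBaxter M)
    (f : α →+* β) : IsYangBaxter (M.map f) := by
  rw [IsYangBaxter] at hM ⊢
  simp only [adjacentOp_map, ← Matrix.map_mul, hM]

end AdjacentOp

def pairIndex (p : Fin 2 × Fin 2) : Fin 4 :=
  ⟨p.1.val + 2 * p.2.val, by have := p.1.isLt; have := p.2.isLt; omega⟩

def intR4 : Matrix (Fin 4) (Fin 4) ℤ := !![1, 0, 0, 1; 0, 1, -1, 0; 0, 1, 1, 0; -1, 0, 0, 1]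

def intR : Matrix (Fin 2 × Fin 2) (Fin 2 × Fin 2) ℤ := intR4.submatrix pairIndex pairIndex

theorem R4_eq_smul_intR4 : R4 = ((Real.sqrt 2 : ℝ) : ℂ)⁻¹ • intR4.map (Int.castRingHom ℂ) := by
  rw [R4]
  congr 1
  ext i j
  fin_cases i <;> fin_cases j <;> simp [intR4]

theorem R_eq_smul_intR : R = ((Real.sqrt 2 : ℝ) : ℂ)⁻¹ • intR.map (Int.castRingHom ℂ) := by
  rw [show R = R4.submatrix pairIndex pairIndex from rfl, R4_eq_smul_intR4]
  rfl

theorem isYangBaxter_intR : IsYangBaxter intR := by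
  unfold IsYangBaxter adjacentOp
  decide

/-- `R` satisfies the Yang–Baxter equation
`(R⊗I₂)(I₂⊗R)(R⊗I₂) = (I₂⊗R)(R⊗I₂)(I₂⊗R)` (as operators on `(ℂ²)^{⊗3}`,
`R⊗I₂ = pairOp 3 0 R` and `I₂⊗R = pairOp 3 1 R`). -/
theorem stmt0 :
    pairOp 3 0 R * pairOp 3 1 R * pairOp 3 0 R =
      pairOp 3 1 R * pairOp 3 0 R * pairOp 3 1 R := by
  simp only [pairOp_eq_adjacentOp]
  rw [R_eq_smul_intR]
  exact (isYangBaxter_intR.map _).smul _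
end

section
/- Let gᵢ = I₂^{⊗(i−1)} ⊗ R² ⊗ I₂^{⊗(n−i−1)} for 1 ≤ i ≤ n−1. Then gᵢ g_{i+1} = −g_{i+1} gᵢ, gᵢ gⱼ = gⱼ gᵢ when |i−j| ≥ 2, and gᵢ² = −I_{2ⁿ}. -/
/-!
`R²` is a monomial (signed permutation) matrix: row `(a, b)` has its only nonzero entry
`(-1)^a` in column `(a + 1, b + 1)`. Hence `gᵢ` is the monomial matrix that flips the bits
`i, i + 1` of a basis index `x` with sign `(-1)^{xᵢ}`. A product of monomial matrices composes
the flips and multiplies the signs, the flips commute, and everything reduces to sign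
bookkeeping: `gᵢ` flips the bit that `g_{i+1}` reads its sign from (anticommutation), disjoint
pairs do not interact, and flipping a pair twice gives the identity with sign
`(-1)^{xᵢ} (-1)^{xᵢ + 1} = -1`.
-/

open Matrix Complex

/-- `gMat n i = I₂^{⊗ i} ⊗ R² ⊗ I₂^{⊗ (n-i-2)}` (0-indexed: `gMat n i` is the
paper's `g_{i+1}`, acting on tensor factors `i` and `i+1`). -/
noncomputable def gMat (n i : ℕ) : Matrix (Fin n → Fin 2) (Fin n → Fin 2) ℂ :=
  pairOp n i (R * R)

section MonomialMatrix

variable {X α : Type*} [DecidableEq X]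

def monomialMatrix [Zero α] (s : X → α) (f : X → X) : Matrix X X α :=
  fun x y => if y = f x then s x else 0

lemma monomialMatrix_mul_monomialMatrix [Fintype X] [NonUnitalNonAssocSemiring α]
    (s t : X → α) (f g : X → X) :
    monomialMatrix s f * monomialMatrix t g = monomialMatrix (fun x => s x * t (f x)) (g ∘ f) := by
  ext x y
  rw [mul_apply, Finset.sum_eq_single (f x) (fun z _ hz => by simp [monomialMatrix, hz])
    (by simp)]
  simp [monomialMatrix]

lemma neg_monomialMatrix [NegZeroClass α] (s : X → α) (f : X → X) :
    -monomialMatrix s f = monomialMatrix (-s) f := by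
  ext x y
  simp only [monomialMatrix, Matrix.neg_apply, Pi.neg_apply]
  split_ifs <;> simp

lemma monomialMatrix_id [Zero α] (s : X → α) : monomialMatrix s id = diagonal s := by
  ext x y
  simp [monomialMatrix, diagonal_apply, eq_comm]

end MonomialMatrix

def bitSign (v : Fin 2) : ℂ := if v = 0 then 1 else -1

lemma bitSign_add_one (v : Fin 2) : bitSign (v + 1) = -bitSign v := by
  fin_cases v <;> simp [bitSign]

lemma bitSign_mul_self (v : Fin 2) : bitSign v * bitSign v = 1 := by
  fin_cases v <;> simp [bitSign]

lemma R_mul_R : R * R = monomialMatrix (fun p => bitSign p.1) (fun p => (p.1 + 1, p.2 + 1)) := by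
  have h2 : ((Real.sqrt 2 : ℝ) : ℂ)⁻¹ * ((Real.sqrt 2 : ℝ) : ℂ)⁻¹ = 2⁻¹ := by
    rw [← mul_inv, ← Complex.ofReal_mul, Real.mul_self_sqrt (by norm_num)]
    norm_num
  ext ⟨a, b⟩ ⟨c, d⟩
  fin_cases a <;> fin_cases b <;> fin_cases c <;> fin_cases d <;>
    simp [Matrix.mul_apply, Fintype.sum_prod_type, Fin.sum_univ_two, R, R4, bitSign, h2,
      monomialMatrix, Prod.ext_iff] <;> norm_num

def flipPair (n i : ℕ) (x : Fin n → Fin 2) : Fin n → Fin 2 := fun j =>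
  if (j : ℕ) = i ∨ (j : ℕ) = i + 1 then x j + 1 else x j

lemma eq_flipPair_iff {n i : ℕ} (h : i + 1 < n) (x y : Fin n → Fin 2) :
    y = flipPair n i x ↔
      (y ⟨i, Nat.lt_of_succ_lt h⟩, y ⟨i + 1, h⟩) =
          (x ⟨i, Nat.lt_of_succ_lt h⟩ + 1, x ⟨i + 1, h⟩ + 1) ∧
        ∀ j : Fin n, ¬((j : ℕ) = i ∨ (j : ℕ) = i + 1) → x j = y j := by
  constructor
  · rintro rfl
    exact ⟨by simp [flipPair], fun j hj => by simp [flipPair, hj]⟩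
  · rintro ⟨hpair, hrest⟩
    simp only [Prod.mk.injEq] at hpair
    funext j
    by_cases hj : (j : ℕ) = i ∨ (j : ℕ) = i + 1
    · rcases hj with hj | hj
      · obtain rfl : j = ⟨i, Nat.lt_of_succ_lt h⟩ := Fin.ext hj
        simp [flipPair, hpair.1]
      · obtain rfl : j = ⟨i + 1, h⟩ := Fin.ext hj
        simp [flipPair, hpair.2]
    · simp [flipPair, hj, hrest j hj]

lemma pairOp_apply {n i : ℕ} (h : i + 1 < n) (M : Matrix (Fin 2 × Fin 2) (Fin 2 × Fin 2) ℂ)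
    (x y : Fin n → Fin 2) :
    pairOp n i M x y =
      M (x ⟨i, Nat.lt_of_succ_lt h⟩, x ⟨i + 1, h⟩) (y ⟨i, Nat.lt_of_succ_lt h⟩, y ⟨i + 1, h⟩) *
        if ∀ j : Fin n, ¬((j : ℕ) = i ∨ (j : ℕ) = i + 1) → x j = y j then 1 else 0 := by
  rw [pairOp]
  erw [dif_pos h]
  refine congrArg (M _ _ * ·) ?_
  have hfactor (j : Fin n) : (if (j : ℕ) = i ∨ (j : ℕ) = i + 1 then (1 : ℂ)
      else if x j = y j then 1 else 0) =
      if ¬((j : ℕ) = i ∨ (j : ℕ) = i + 1) → x j = y j then 1 else 0 := by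
    split_ifs <;> tauto
  rw [Finset.prod_congr rfl fun j _ => hfactor j, Fintype.prod_boole]
  congr

lemma pairOp_monomialMatrix_flip {n i : ℕ} (h : i + 1 < n) (s : Fin 2 × Fin 2 → ℂ) :
    pairOp n i (monomialMatrix s fun p => (p.1 + 1, p.2 + 1)) =
      monomialMatrix (fun x => s (x ⟨i, Nat.lt_of_succ_lt h⟩, x ⟨i + 1, h⟩)) (flipPair n i) := by
  ext x y
  rw [pairOp_apply h]
  simp only [monomialMatrix, ite_zero_mul_ite_zero, mul_one]
  exact if_congr (eq_flipPair_iff h x y).symm rfl rfl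

lemma gMat_eq {n i : ℕ} (h : i + 1 < n) :
    gMat n i = monomialMatrix (fun x => bitSign (x ⟨i, Nat.lt_of_succ_lt h⟩)) (flipPair n i) := by
  rw [gMat, R_mul_R, pairOp_monomialMatrix_flip h]

lemma flipPair_comm (n i j : ℕ) : flipPair n i ∘ flipPair n j = flipPair n j ∘ flipPair n i := by
  funext x k
  simp only [Function.comp_apply, flipPair]
  split_ifs <;> rfl

lemma flipPair_flipPair (n i : ℕ) : flipPair n i ∘ flipPair n i = id := by
  funext x k
  simp only [Function.comp_apply, flipPair, id]
  split_ifs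
  · exact (by decide : ∀ v : Fin 2, v + 1 + 1 = v) _
  · rfl

theorem stmt9_general (n : ℕ) :
    (∀ i, i + 2 ≤ n - 1 → gMat n i * gMat n (i + 1) = -(gMat n (i + 1) * gMat n i)) ∧
    (∀ i j, i + 2 ≤ j → j + 1 ≤ n - 1 → gMat n i * gMat n j = gMat n j * gMat n i) ∧
    (∀ i, i + 1 ≤ n - 1 → gMat n i * gMat n i = -1) := by
  refine ⟨fun i hi => ?_, fun i j hij hj => ?_, fun i hi => ?_⟩
  · rw [gMat_eq (i := i) (by omega), gMat_eq (i := i + 1) (by omega),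
      monomialMatrix_mul_monomialMatrix, monomialMatrix_mul_monomialMatrix, neg_monomialMatrix,
      flipPair_comm]
    have hne : i ≠ i + 1 + 1 := by omega
    congr 1
    funext x
    simp [flipPair, hne, bitSign_add_one, mul_comm]
  · rw [gMat_eq (i := i) (by omega), gMat_eq (i := j) (by omega),
      monomialMatrix_mul_monomialMatrix, monomialMatrix_mul_monomialMatrix, flipPair_comm]
    have hj_off : ¬(j = i ∨ j = i + 1) := by omega
    have hi_off : ¬(i = j ∨ i = j + 1) := by omega
    congr 1
    funext x
    simp [flipPair, hj_off, hi_off, mul_comm]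
  · rw [gMat_eq (by omega), monomialMatrix_mul_monomialMatrix, flipPair_flipPair,
      monomialMatrix_id]
    simp only [flipPair, true_or, if_true, bitSign_add_one, mul_neg, bitSign_mul_self]
    rw [← diagonal_one, ← diagonal_neg]

/-- the `gᵢ` satisfy `gᵢg_{i+1} = −g_{i+1}gᵢ`, `gᵢgⱼ = gⱼgᵢ` for
`|i−j| ≥ 2`, and `gᵢ² = −I_{2ⁿ}` (0-indexed; valid indices are `i ≤ n-2`). -/
theorem stmt9 (n : ℕ) (hn : 2 ≤ n) :
    (∀ i, i + 2 ≤ n - 1 → gMat n i * gMat n (i + 1) = -(gMat n (i + 1) * gMat n i)) ∧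
    (∀ i j, i + 2 ≤ j → j + 1 ≤ n - 1 → gMat n i * gMat n j = gMat n j * gMat n i) ∧
    (∀ i, i + 1 ≤ n - 1 → gMat n i * gMat n i = -1) :=
  stmt9_general n
end

section
/- The assignment σᵢ ↦ I₂^{⊗(i−1)} ⊗ R ⊗ I₂^{⊗(n−i−1)} extends to a group homomorphism from the braid group Bₙ to GL(2ⁿ, ℂ), i.e., these matrices satisfy the braid relations: they commute for |i−j| ≥ 2 and satisfy πₙ(σᵢ)πₙ(σ_{i+1})πₙ(σᵢ) = πₙ(σ_{i+1})πₙ(σᵢ)πₙ(σ_{i+1}). -/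
/-! A matrix `T` on a few tensor factors of `(ℂ²)^{⊗ n}`, placed on the factors `s` with the
identity on all others, is `T ⊗ 1` up to reordering the factors, so `T ↦ onSites s T` is a ring
homomorphism and operators on disjoint sets of factors commute, as `T ⊗ 1` and `1 ⊗ U` do. The
operator `piRep n i` is `R` placed on the factors `i, i + 1`. It is invertible because `R` is
orthogonal, and the far commutation relation is the disjoint case. Placing `R` on
`i, i + 1, i + 2` factors through the case `n = 3`, so the braid relation reduces to the
Yang–Baxter equation for `R`; after clearing the factor `1/√2` this is an identity between
`8 × 8` integer matrices. -/

open Matrix Complex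

/-- `piRep n i = I₂^{⊗ i} ⊗ R ⊗ I₂^{⊗ (n-i-2)}` (0-indexed: `piRep n i` is the
paper's `πₙ(σ_{i+1})`). -/
noncomputable def piRep (n i : ℕ) : Matrix (Fin n → Fin 2) (Fin n → Fin 2) ℂ :=
  pairOp n i R

open scoped Kronecker

variable {𝕜 α ι κ κ' μ : Type*}

section Split
variable [DecidableEq ι] [Fintype κ]

noncomputable def Equiv.piSplitRange (s : κ ↪ ι) :
    (ι → α) ≃ (κ → α) × ({j // j ∉ Set.range s} → α) :=
  (Equiv.piEquivPiSubtypeProd (· ∈ Set.range s) fun _ => α).trans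
    ((Equiv.piCongrLeft' (fun _ => α) (Equiv.ofInjective s s.injective).symm).prodCongr
      (Equiv.refl _))

@[simp] lemma Equiv.piSplitRange_apply_fst (s : κ ↪ ι) (x : ι → α) :
    (Equiv.piSplitRange s x).1 = x ∘ s := rfl

@[simp] lemma Equiv.piSplitRange_apply_snd (s : κ ↪ ι) (x : ι → α) (j) :
    (Equiv.piSplitRange s x).2 j = x j := rfl

end Split

namespace Matrix

variable [CommSemiring 𝕜] [Fintype α] [DecidableEq α] [Fintype ι] [DecidableEq ι] [Fintype κ]
  [DecidableEq κ]

noncomputable def onSites (s : κ ↪ ι) : Matrix (κ → α) (κ → α) 𝕜 →+* Matrix (ι → α) (ι → α) 𝕜 where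
  toFun T := (T ⊗ₖ 1).submatrix (Equiv.piSplitRange s) (Equiv.piSplitRange s)
  map_one' := by simp
  map_mul' T U := by rw [submatrix_mul_equiv, ← mul_kronecker_mul, one_mul]
  map_zero' := by simp
  map_add' T U := by rw [add_kronecker]; rfl

lemma onSites_apply (s : κ ↪ ι) (T : Matrix (κ → α) (κ → α) 𝕜) (x y : ι → α) :
    onSites s T x y = T (x ∘ s) (y ∘ s) * if ∀ j ∉ Set.range s, x j = y j then 1 else 0 := by
  simp [onSites, one_apply, funext_iff]

lemma onSites_onSites [Fintype μ] [DecidableEq μ] (s : κ ↪ ι) (t : μ ↪ κ)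
    (T : Matrix (μ → α) (μ → α) 𝕜) : onSites s (onSites t T) = onSites (t.trans s) T := by
  ext x y
  simp only [onSites_apply, mul_assoc, ite_zero_mul_ite_zero, one_mul]
  congr 2
  apply propext
  simp only [Set.mem_range, Function.Embedding.trans_apply, not_exists, Function.comp_apply]
  constructor
  · rintro ⟨ht, hs⟩ j hj
    by_cases hjs : ∃ k, s k = j
    · obtain ⟨k, rfl⟩ := hjs
      exact ht k fun l hl => hj l (by rw [hl])
    · exact hs j fun k hk => hjs ⟨k, hk⟩
  · intro h
    exact ⟨fun k hk => h (s k) fun l hl => hk l (s.injective hl),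
      fun j hj => h j fun l hl => hj (t l) hl⟩

lemma onSites_eq_submatrix_one_kronecker [Fintype κ'] {s : κ' ↪ ι} {s' : κ ↪ ι}
    (hs : Disjoint (Set.range s) (Set.range s')) (U : Matrix (κ → α) (κ → α) 𝕜) :
    onSites s' U = (1 ⊗ₖ onSites (s'.codRestrict (Set.range s)ᶜ
      fun k => Set.disjoint_right.1 hs ⟨k, rfl⟩) U).submatrix
        (Equiv.piSplitRange s) (Equiv.piSplitRange s) := by
  ext x y
  simp only [submatrix_apply, kroneckerMap_apply, one_apply, onSites_apply,
    Equiv.piSplitRange_apply_fst, funext_iff]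
  rw [mul_left_comm, ite_zero_mul_ite_zero, one_mul]
  congr 2
  apply propext
  simp only [Set.mem_range, not_exists, Function.comp_apply, Subtype.forall, Subtype.ext_iff,
    Function.Embedding.codRestrict_apply, Equiv.piSplitRange_apply_snd]
  constructor
  · intro h
    exact ⟨fun k => h (s k) fun l hl => Set.disjoint_left.1 hs ⟨k, rfl⟩ ⟨l, hl⟩,
      fun j _ hj => h j hj⟩
  · rintro ⟨hs, hs'⟩ j hj
    by_cases hjs : j ∈ Set.range s
    · obtain ⟨k, rfl⟩ := hjs
      exact hs k
    · exact hs' j hjs hj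

lemma onSites_commute [Fintype κ'] [DecidableEq κ'] {s : κ' ↪ ι} {s' : κ ↪ ι}
    (hs : Disjoint (Set.range s) (Set.range s'))
    (T : Matrix (κ' → α) (κ' → α) 𝕜) (U : Matrix (κ → α) (κ → α) 𝕜) :
    Commute (onSites s T) (onSites s' U) := by
  rw [onSites_eq_submatrix_one_kronecker hs]
  have hTU (V : Matrix ({j // j ∉ Set.range s} → α) ({j // j ∉ Set.range s} → α) 𝕜) :
      Commute (T ⊗ₖ 1) (1 ⊗ₖ V) := by
    rw [Commute, SemiconjBy, ← mul_kronecker_mul, ← mul_kronecker_mul, one_mul, mul_one,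
      one_mul, mul_one]
  exact (hTU _).map (reindexAlgEquiv 𝕜 𝕜 (Equiv.piSplitRange s).symm)

end Matrix

def Fin.window (i : ℕ) {m n : ℕ} (h : i + m ≤ n) : Fin m ↪ Fin n :=
  (Fin.natAddEmb i).trans (Fin.castLEEmb h)

@[simp] lemma Fin.window_apply (i : ℕ) {m n : ℕ} (h : i + m ≤ n) (k : Fin m) :
    (Fin.window i h k : ℕ) = i + k := rfl

lemma Fin.mem_range_window {i m n : ℕ} (h : i + m ≤ n) (j : Fin n) :
    j ∈ Set.range (Fin.window i h) ↔ i ≤ j ∧ (j : ℕ) < i + m := by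
  constructor
  · rintro ⟨k, rfl⟩
    simp
  · rintro ⟨hij, hjm⟩
    exact ⟨⟨j - i, by omega⟩, Fin.ext (by simp; omega)⟩

lemma Fin.window_trans_window {i k m l n : ℕ} (hk : k + l ≤ m) (h : i + m ≤ n) :
    (Fin.window k hk).trans (Fin.window i h) = Fin.window (i + k) (by omega) := by
  ext
  simp [add_assoc]

lemma Fin.disjoint_range_window {i j m m' n : ℕ} (hi : i + m ≤ n) (hj : j + m' ≤ n)
    (hij : i + m ≤ j) : Disjoint (Set.range (Fin.window i hi)) (Set.range (Fin.window j hj)) := by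
  refine Set.disjoint_left.2 fun a ha ha' => ?_
  rw [Fin.mem_range_window] at ha ha'
  omega

lemma pairOp_eq_onSites {n i : ℕ} (h : i + 2 ≤ n) (M : Matrix (Fin 2 × Fin 2) (Fin 2 × Fin 2) ℂ) :
    pairOp n i M =
      onSites (Fin.window i h) (M.submatrix (finTwoArrowEquiv _) (finTwoArrowEquiv _)) := by
  ext x y
  rw [show pairOp n i M = _ from dif_pos (show i + 1 < n by omega), onSites_apply]
  beta_reduce
  congr 1
  simp_rw [← ite_or, Finset.prod_boole, Finset.mem_univ, true_implies, Fin.mem_range_window]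
  congr 1
  exact propext (forall_congr' fun j => by omega)

lemma pairOp_add_eq_onSites_pairOp {n m i k : ℕ} (h : i + m ≤ n) (hk : k + 2 ≤ m)
    (M : Matrix (Fin 2 × Fin 2) (Fin 2 × Fin 2) ℂ) :
    pairOp n (i + k) M = onSites (Fin.window i h) (pairOp m k M) := by
  rw [pairOp_eq_onSites hk, onSites_onSites, Fin.window_trans_window, pairOp_eq_onSites]

lemma pairOp_commute {n i j : ℕ} (hij : i + 2 ≤ j) (hj : j + 2 ≤ n)
    (M N : Matrix (Fin 2 × Fin 2) (Fin 2 × Fin 2) ℂ) :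
    Commute (pairOp n i M) (pairOp n j N) := by
  rw [pairOp_eq_onSites (by omega), pairOp_eq_onSites hj]
  exact onSites_commute (Fin.disjoint_range_window _ _ hij) _ _

lemma isUnit_pairOp {n i : ℕ} (h : i + 2 ≤ n) {M : Matrix (Fin 2 × Fin 2) (Fin 2 × Fin 2) ℂ}
    (hM : IsUnit M) : IsUnit (pairOp n i M) := by
  rw [pairOp_eq_onSites h]
  exact (hM.map (reindexAlgEquiv ℂ ℂ (finTwoArrowEquiv (Fin 2)).symm)).map _

lemma piRep_add_eq_onSites_piRep {n m i k : ℕ} (h : i + m ≤ n) (hk : k + 2 ≤ m) :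
    piRep n (i + k) = onSites (Fin.window i h) (piRep m k) :=
  pairOp_add_eq_onSites_pairOp h hk R

def R4Int : Matrix (Fin 4) (Fin 4) ℤ := !![1, 0, 0, 1; 0, 1, -1, 0; 0, 1, 1, 0; -1, 0, 0, 1]

-- `finProdFinEquiv (b, a) = a + 2 * b`, the indexing convention of `R`
def RInt : Matrix (Fin 2 × Fin 2) (Fin 2 × Fin 2) ℤ :=
  R4Int.submatrix (finProdFinEquiv ∘ Prod.swap) (finProdFinEquiv ∘ Prod.swap)

lemma R_eq_smul_map_RInt : R = ((√2 : ℝ) : ℂ)⁻¹ • RInt.map (Int.castRingHom ℂ) := by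
  have hR4 : R4 = ((√2 : ℝ) : ℂ)⁻¹ • R4Int.map (Int.castRingHom ℂ) := by
    rw [R4]
    congr 1
    ext a b
    fin_cases a <;> fin_cases b <;> simp [R4Int]
  ext p q
  rw [R, hR4]
  rfl

lemma RInt_mul_transpose : RInt * RIntᵀ = 2 := by decide

lemma R_mul_transpose : R * Rᵀ = 1 := by
  rw [R_eq_smul_map_RInt, transpose_smul, smul_mul_smul_comm, ← transpose_map, ← Matrix.map_mul,
    RInt_mul_transpose, ← Complex.ofReal_inv, ← Complex.ofReal_mul, ← mul_inv,
    Real.mul_self_sqrt zero_le_two, Matrix.map_ofNat (map_zero _), ← diagonal_smul,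
    ← diagonal_one]
  congr 1
  ext
  simp

lemma isUnit_R : IsUnit R := IsUnit.of_mul_eq_one _ R_mul_transpose

def RIntLeft : Matrix (Fin 3 → Fin 2) (Fin 3 → Fin 2) ℤ :=
  of fun x y => RInt (x 0, x 1) (y 0, y 1) * if x 2 = y 2 then 1 else 0

def RIntRight : Matrix (Fin 3 → Fin 2) (Fin 3 → Fin 2) ℤ :=
  of fun x y => (if x 0 = y 0 then 1 else 0) * RInt (x 1, x 2) (y 1, y 2)

lemma RIntLeft_mul_RIntRight_mul_RIntLeft :
    RIntLeft * RIntRight * RIntLeft = RIntRight * RIntLeft * RIntRight := by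
  decide

lemma piRep_three_zero : piRep 3 0 = ((√2 : ℝ) : ℂ)⁻¹ • RIntLeft.map (Int.castRingHom ℂ) := by
  ext x y
  simp [piRep, pairOp, Fin.prod_univ_three, R_eq_smul_map_RInt, RIntLeft]

lemma piRep_three_one : piRep 3 1 = ((√2 : ℝ) : ℂ)⁻¹ • RIntRight.map (Int.castRingHom ℂ) := by
  ext x y
  simp [piRep, pairOp, Fin.prod_univ_three, R_eq_smul_map_RInt, RIntRight]

lemma piRep_three_braid :
    piRep 3 0 * piRep 3 1 * piRep 3 0 = piRep 3 1 * piRep 3 0 * piRep 3 1 := by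
  rw [piRep_three_zero, piRep_three_one]
  simp only [smul_mul_smul_comm, ← Matrix.map_mul, RIntLeft_mul_RIntRight_mul_RIntLeft]

/-- the matrices `πₙ(σᵢ) = I₂^{⊗(i−1)} ⊗ R ⊗ I₂^{⊗(n−i−1)}` are
invertible (so land in `GL(2ⁿ, ℂ)`) and satisfy the braid relations: far
commutation for `|i−j| ≥ 2` and `πₙ(σᵢ)πₙ(σ_{i+1})πₙ(σᵢ) = πₙ(σ_{i+1})πₙ(σᵢ)πₙ(σ_{i+1})`;
hence `σᵢ ↦ πₙ(σᵢ)` extends to a group homomorphism `Bₙ → GL(2ⁿ, ℂ)` (0-indexed). -/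
theorem stmt11 (n : ℕ) :
    (∀ i, i + 2 ≤ n → IsUnit (piRep n i)) ∧
    (∀ i j, i + 2 ≤ j → j + 2 ≤ n → piRep n i * piRep n j = piRep n j * piRep n i) ∧
    (∀ i, i + 3 ≤ n →
      piRep n i * piRep n (i + 1) * piRep n i =
        piRep n (i + 1) * piRep n i * piRep n (i + 1)) := by
  refine ⟨fun i hi => isUnit_pairOp hi isUnit_R,
    fun i j hij hj => (pairOp_commute hij hj R R).eq, fun i hi => ?_⟩
  have h₀ : piRep n i = onSites (Fin.window i hi) (piRep 3 0) :=
    piRep_add_eq_onSites_piRep hi (k := 0) (by norm_num)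
  rw [h₀, piRep_add_eq_onSites_piRep hi (by norm_num), ← map_mul, ← map_mul, ← map_mul,
    ← map_mul, piRep_three_braid]
end

section
/- In the group E_m^ν presented by generators x₁,…,x_m and a central element −1 of order 2 with relations xᵢ² = ν, xᵢxⱼ = xⱼxᵢ for |i−j| ≥ 2, and x_{i+1}xᵢ = −xᵢx_{i+1}, the center is {±1} when m is even, and {±1, ±x₁x₃⋯x_m} when m is odd. -/
/-!
`E_m^ν` is isomorphic to the central extension of `𝔽₂^m` by `{±1} ≅ 𝔽₂` with cocycle
`β(v, w) = vᵀ M w`, where `M` carries the bit of `ν` on its diagonal and `1` on its subdiagonal: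
the generators map to `(1, 0)` and `(0, eᵢ)`, and the ordered products
`(-1)^s x₁^{v₁} ⋯ x_m^{v_m}` form a normal form inverting this map. In such an extension `(s, v)`
is central iff `β(v, ·) = β(·, v)`, i.e. `vM = Mv`, which says `v_{j-1} = v_{j+1}` for all `j`,
with `v₀ = v_{m+1} = 0`. The solutions are `v = 0` and, for odd `m` only,
`v = (1, 0, 1, …, 0, 1)`, the exponent vector of `x₁x₃⋯x_m`.
-/

/-- Relators for the group `E_m^ν`: generators are `none` (the central element `-1`)
and `some i` (the generator `xᵢ`, 0-indexed); relations are `(-1)² = 1`, `-1` central,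
`xᵢ² = ν`, far commutation `xᵢxⱼ = xⱼxᵢ` for `|i-j| ≥ 2`, and adjacent
anticommutation `x_{i+1}xᵢ = (-1)·xᵢx_{i+1}`. -/
def Erel (m : ℕ) (ν : ℤˣ) : Set (FreeGroup (Option (Fin m))) :=
  {FreeGroup.of none ^ 2} ∪
    {r | ∃ i : Fin m, r = FreeGroup.of none * FreeGroup.of (some i) *
        (FreeGroup.of none)⁻¹ * (FreeGroup.of (some i))⁻¹} ∪
    {r | ∃ i : Fin m, r = FreeGroup.of (some i) ^ 2 *
        (if ν = 1 then 1 else FreeGroup.of none)⁻¹} ∪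
    {r | ∃ i j : Fin m, (i : ℕ) + 2 ≤ (j : ℕ) ∧ r = FreeGroup.of (some i) *
        FreeGroup.of (some j) * (FreeGroup.of (some i))⁻¹ * (FreeGroup.of (some j))⁻¹} ∪
    {r | ∃ i j : Fin m, (j : ℕ) = (i : ℕ) + 1 ∧ r = FreeGroup.of (some j) *
        FreeGroup.of (some i) *
        (FreeGroup.of none * FreeGroup.of (some i) * FreeGroup.of (some j))⁻¹}

/-- The group `E_m^ν`. -/
abbrev Egrp (m : ℕ) (ν : ℤˣ) := PresentedGroup (Erel m ν)

/-- The central element `-1` of `E_m^ν`. -/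
def neg1 (m : ℕ) (ν : ℤˣ) : Egrp m ν := PresentedGroup.of none

/-- The generator `x_{i+1}` of `E_m^ν` (0-indexed: `xgen m ν i` is the paper's `x_{i+1}`). -/
def xgen (m : ℕ) (ν : ℤˣ) (i : Fin m) : Egrp m ν := PresentedGroup.of (some i)

/-- The element `z = x₁x₃⋯` : the ordered product of the odd-indexed generators
(0-indexed: even positions). -/
def zel (m : ℕ) (ν : ℤˣ) : Egrp m ν :=
  ((List.finRange m).map fun (i : Fin m) => if (i : ℕ) % 2 = 0 then xgen m ν i else 1).prod

open Matrix

lemma ZMod.eq_zero_or_eq_one_of_two (a : ZMod 2) : a = 0 ∨ a = 1 := by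
  revert a; decide

lemma pow_val_add_of_pow_eq_one {M : Type*} [Monoid M] {g : M} {n : ℕ} [NeZero n]
    (hg : g ^ n = 1) (a b : ZMod n) : g ^ (a + b).val = g ^ a.val * g ^ b.val := by
  rw [ZMod.val_add, ← pow_eq_pow_mod _ hg, pow_add]

lemma PresentedGroup.leftInverse_of_map_of_mul {α H : Type*} [Group H]
    {rels : Set (FreeGroup α)} (f : PresentedGroup rels →* H) (ψ : H → PresentedGroup rels)
    (hψ : ψ 1 = 1) (hof : ∀ t a, ψ (f (PresentedGroup.of t) * a) = PresentedGroup.of t * ψ a) :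
    Function.LeftInverse ψ f := by
  let S : Subgroup (PresentedGroup rels) :=
    { carrier := {g | ∀ a, ψ (f g * a) = g * ψ a}
      one_mem' := fun a => by simp
      mul_mem' := fun {g h} hg hh a => by rw [map_mul, mul_assoc, hg, hh, mul_assoc]
      inv_mem' := fun {g} hg a => by
        have := hg ((f g)⁻¹ * a)
        rw [mul_inv_cancel_left] at this
        change ψ (f g⁻¹ * a) = g⁻¹ * ψ a
        rw [map_inv, this, inv_mul_cancel_left] }
  intro g
  simpa [hψ] using PresentedGroup.generated_by rels S hof g 1

/-- The central extension of `V` by `R` defined by the bilinear cocycle `β`. -/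
@[ext]
structure TwistedProd {R V : Type*} [CommRing R] [AddCommGroup V] [Module R V]
    (β : LinearMap.BilinForm R V) where
  s : R
  v : V

namespace TwistedProd

variable {R V : Type*} [CommRing R] [AddCommGroup V] [Module R V] {β : LinearMap.BilinForm R V}

instance : Group (TwistedProd β) where
  mul a b := ⟨a.s + b.s + β a.v b.v, a.v + b.v⟩
  one := ⟨0, 0⟩
  inv a := ⟨-a.s + β a.v a.v, -a.v⟩
  mul_assoc a b c := by
    ext
    · change a.s + b.s + β a.v b.v + c.s + β (a.v + b.v) c.v
        = a.s + (b.s + c.s + β b.v c.v) + β a.v (b.v + c.v)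
      simp only [map_add, LinearMap.add_apply]
      ring
    · exact add_assoc _ _ _
  one_mul a := by
    ext
    · change 0 + a.s + β 0 a.v = a.s
      simp
    · exact zero_add _
  mul_one a := by
    ext
    · change a.s + 0 + β a.v 0 = a.s
      simp
    · exact add_zero _
  inv_mul_cancel a := by
    ext
    · change -a.s + β a.v a.v + a.s + β (-a.v) a.v = 0
      simp
    · exact neg_add_cancel _

@[simp] lemma mul_s (a b : TwistedProd β) : (a * b).s = a.s + b.s + β a.v b.v := rfl
@[simp] lemma mul_v (a b : TwistedProd β) : (a * b).v = a.v + b.v := rfl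
@[simp] lemma one_s : (1 : TwistedProd β).s = 0 := rfl
@[simp] lemma one_v : (1 : TwistedProd β).v = 0 := rfl

lemma mem_center_iff {a : TwistedProd β} :
    a ∈ Subgroup.center (TwistedProd β) ↔ ∀ w, β a.v w = β w a.v := by
  rw [Subgroup.mem_center_iff]
  refine ⟨fun h w => ?_, fun h b => ?_⟩
  · have := congrArg TwistedProd.s (h ⟨0, w⟩)
    simp only [mul_s] at this
    linear_combination this.symm
  · ext
    · simp only [mul_s, h b.v]
      ring
    · exact add_comm _ _

lemma mk_zero_mul_mk_zero (v w : V) :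
    (⟨0, v⟩ * ⟨0, w⟩ : TwistedProd β) = ⟨β v w, v + w⟩ := by
  ext <;> simp

lemma mk_zero_pow (r : R) (n : ℕ) : (⟨r, 0⟩ : TwistedProd β) ^ n = ⟨n • r, 0⟩ := by
  induction n with
  | zero => ext <;> simp
  | succ n ih => ext <;> simp [pow_succ, ih, add_smul]

lemma list_prod_map_mk_zero (L : List V) (hL : L.Pairwise fun v w => β v w = 0) :
    (L.map fun v => (⟨0, v⟩ : TwistedProd β)).prod = ⟨0, L.sum⟩ := by
  induction L with
  | nil => rfl
  | cons v L ih =>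
    rw [List.pairwise_cons] at hL
    rw [List.map_cons, List.prod_cons, ih hL.2]
    ext
    · simp [map_list_sum, List.sum_eq_zero (l := L.map (β v)) (by simpa using hL.1)]
    · simp

end TwistedProd

section zeroPad

variable {R : Type*} [AddCommMonoid R] {m : ℕ}

/-- The sequence `0, v₀, v₁, …, v_{m-1}, 0, 0, …`; the shift by one makes both boundary
conditions of the recurrence `u (j + 2) = u j` below read `u 0 = 0 = u (m + 1)`. -/
def zeroPad (v : Fin m → R) : ℕ → R
  | 0 => 0
  | n + 1 => if h : n < m then v ⟨n, h⟩ else 0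

lemma zeroPad_val_succ (v : Fin m → R) (k : Fin m) : zeroPad v (k + 1) = v k := by
  simp [zeroPad]

lemma sum_ite_val_eq_zeroPad (v : Fin m → R) (n : ℕ) :
    ∑ k : Fin m, (if (k : ℕ) = n then v k else 0) = zeroPad v (n + 1) := by
  simp only [zeroPad]
  split_ifs with h
  · rw [Finset.sum_eq_single ⟨n, h⟩ (fun k _ hk => if_neg fun hkn => hk (Fin.ext hkn))
      (by simp)]
    simp
  · exact Finset.sum_eq_zero fun k _ => if_neg (by omega)

lemma sum_ite_eq_val_succ_eq_zeroPad (v : Fin m → R) (n : ℕ) :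
    ∑ k : Fin m, (if n = (k : ℕ) + 1 then v k else 0) = zeroPad v n := by
  cases n with
  | zero => simp [zeroPad]
  | succ n => simp [← sum_ite_val_eq_zeroPad, eq_comm]

end zeroPad

/-- `ν = (-1) ^ nuBit ν`. -/
def nuBit (ν : ℤˣ) : ZMod 2 := if ν = 1 then 0 else 1

/-- In the model `(0, eᵢ) * (0, eⱼ) = (M i j, eᵢ + eⱼ)`: the diagonal encodes `xᵢ² = ν`, the
subdiagonal the anticommutation `x_{i+1} xᵢ = -xᵢ x_{i+1}`. -/
def cocycleMatrix (m : ℕ) (ν : ℤˣ) : Matrix (Fin m) (Fin m) (ZMod 2) :=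
  Matrix.of fun i j => (if (i : ℕ) = j + 1 then 1 else 0) + if i = j then nuBit ν else 0

def altVec (m : ℕ) : Fin m → ZMod 2 := fun j => if (j : ℕ) % 2 = 0 then 1 else 0

section cocycleMatrix

variable {m : ℕ} {ν : ℤˣ}

lemma cocycleMatrix_apply_of_lt {i j : Fin m} (hij : i < j) : cocycleMatrix m ν i j = 0 := by
  have hne : i ≠ j := hij.ne
  rw [Fin.lt_def] at hij
  simp [cocycleMatrix, show (i : ℕ) ≠ j + 1 by omega, hne]

lemma vecMul_cocycleMatrix_apply (v : Fin m → ZMod 2) (j : Fin m) :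
    (v ᵥ* cocycleMatrix m ν) j = zeroPad v (j + 2) + nuBit ν * v j := by
  simp [vecMul, dotProduct, cocycleMatrix, mul_add, Finset.sum_add_distrib,
    sum_ite_val_eq_zeroPad, mul_comm]

lemma cocycleMatrix_mulVec_apply (v : Fin m → ZMod 2) (j : Fin m) :
    (cocycleMatrix m ν *ᵥ v) j = zeroPad v j + nuBit ν * v j := by
  simp [mulVec, dotProduct, cocycleMatrix, add_mul, Finset.sum_add_distrib,
    sum_ite_eq_val_succ_eq_zeroPad]

lemma vecMul_cocycleMatrix_eq_mulVec_iff (v : Fin m → ZMod 2) :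
    v ᵥ* cocycleMatrix m ν = cocycleMatrix m ν *ᵥ v ↔
      ∀ j < m, zeroPad v (j + 2) = zeroPad v j := by
  simp only [funext_iff, vecMul_cocycleMatrix_apply, cocycleMatrix_mulVec_apply, add_left_inj,
    Fin.forall_iff]

end cocycleMatrix

lemma forall_zeroPad_add_two_eq_iff {m : ℕ} (v : Fin m → ZMod 2) :
    (∀ j < m, zeroPad v (j + 2) = zeroPad v j) ↔ v = 0 ∨ (m % 2 = 1 ∧ v = altVec m) := by
  constructor
  · intro h
    have hper : ∀ n ≤ m + 1, zeroPad v n = if n % 2 = 1 then zeroPad v 1 else 0 := by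
      intro n
      induction n using Nat.strong_induction_on with
      | _ n ih =>
        match n with
        | 0 => simp [zeroPad]
        | 1 => simp
        | n + 2 =>
          intro hn
          rw [h n (by omega), ih n (by omega) (by omega)]
          simp
    have hv : ∀ k : Fin m, v k = if (k : ℕ) % 2 = 0 then zeroPad v 1 else 0 := fun k => by
      rw [← zeroPad_val_succ v k, hper _ (by omega)]
      simp [Nat.succ_mod_two_eq_one_iff]
    have hend : zeroPad v (m + 1) = 0 := by simp [zeroPad]
    rcases (zeroPad v 1).eq_zero_or_eq_one_of_two with h1 | h1
    · left
      funext k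
      simp [hv, h1]
    · right
      rw [hper _ le_rfl, h1] at hend
      refine ⟨?_, funext fun k => by simp [hv, h1, altVec]⟩
      by_contra hm
      simp [Nat.succ_mod_two_eq_one_iff, show m % 2 = 0 by omega] at hend
  · rintro (rfl | ⟨hm, rfl⟩) j hj
    · cases j <;> simp [zeroPad]
    · rcases j with _ | j
      · simp [zeroPad, altVec]
      · simp only [zeroPad, altVec, dif_pos (show j < m by omega)]
        split_ifs <;> first | rfl | omega

abbrev Emodel (m : ℕ) (ν : ℤˣ) := TwistedProd (Matrix.toLinearMap₂' (ZMod 2) (cocycleMatrix m ν))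

namespace Emodel

variable {m : ℕ} {ν : ℤˣ}

lemma form_single_single (i j : Fin m) (a b : ZMod 2) :
    Matrix.toLinearMap₂' (ZMod 2) (cocycleMatrix m ν) (Pi.single i a) (Pi.single j b) =
      a * cocycleMatrix m ν i j * b := by
  simp [Matrix.toLinearMap₂'_apply']
  ring

def negOne : Emodel m ν := ⟨1, 0⟩

def gen (i : Fin m) : Emodel m ν := ⟨0, Pi.single i 1⟩

lemma negOne_mul (a : Emodel m ν) : negOne * a = ⟨1 + a.s, a.v⟩ := by
  ext <;> simp [negOne]

lemma gen_mul (i : Fin m) (a : Emodel m ν) :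
    gen i * a = ⟨a.s + (cocycleMatrix m ν *ᵥ a.v) i, Pi.single i 1 + a.v⟩ := by
  ext <;> simp [gen, Matrix.toLinearMap₂'_apply']

lemma negOne_sq : negOne (m := m) (ν := ν) ^ 2 = 1 := by
  rw [negOne, TwistedProd.mk_zero_pow]
  rfl

lemma commute_negOne (a : Emodel m ν) : Commute negOne a :=
  (Subgroup.mem_center_iff.mp (TwistedProd.mem_center_iff.mpr (by simp [negOne])) a).symm

lemma gen_sq (i : Fin m) : gen (ν := ν) i ^ 2 = if ν = 1 then 1 else negOne := by
  rw [pow_two, gen, TwistedProd.mk_zero_mul_mk_zero, form_single_single]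
  split_ifs with hν <;> ext <;>
    simp [cocycleMatrix, nuBit, negOne, hν, CharTwo.add_self_eq_zero]

lemma commute_gen_of_add_two_le {i j : Fin m} (hij : (i : ℕ) + 2 ≤ j) :
    Commute (gen (ν := ν) i) (gen j) := by
  have hne : i ≠ j := fun h => by rw [h] at hij; omega
  rw [Commute, SemiconjBy, gen, gen, TwistedProd.mk_zero_mul_mk_zero,
    TwistedProd.mk_zero_mul_mk_zero, form_single_single, form_single_single]
  ext <;> simp [cocycleMatrix, hne, hne.symm, show (i : ℕ) ≠ j + 1 by omega,
    show (j : ℕ) ≠ i + 1 by omega, add_comm]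

lemma gen_succ_mul_gen {i j : Fin m} (hij : (j : ℕ) = i + 1) :
    gen (ν := ν) j * gen i = negOne * gen i * gen j := by
  have hne : i ≠ j := fun h => by rw [h] at hij; omega
  rw [mul_assoc, gen, gen, TwistedProd.mk_zero_mul_mk_zero, TwistedProd.mk_zero_mul_mk_zero,
    form_single_single, form_single_single, negOne_mul]
  ext
  · simp [cocycleMatrix, hij, hne, hne.symm]
    omega
  · exact add_comm _ _

lemma mem_center_iff {a : Emodel m ν} :
    a ∈ Subgroup.center (Emodel m ν) ↔ a.v = 0 ∨ (m % 2 = 1 ∧ a.v = altVec m) := by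
  rw [TwistedProd.mem_center_iff, ← forall_zeroPad_add_two_eq_iff,
    ← vecMul_cocycleMatrix_eq_mulVec_iff]
  simp only [Matrix.toLinearMap₂'_apply', dotProduct_mulVec,
    dotProduct_comm _ (cocycleMatrix m ν *ᵥ a.v)]
  exact ⟨dotProduct_eq _ _, fun h w => by rw [h]⟩

end Emodel

namespace Egrp

variable {m : ℕ} {ν : ℤˣ}

section lift

variable {G : Type*} [Group G] (c : G) (x : Fin m → G) (hc : c ^ 2 = 1)
  (hcx : ∀ i, Commute c (x i)) (hsq : ∀ i, x i ^ 2 = if ν = 1 then 1 else c)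
  (hfar : ∀ i j : Fin m, (i : ℕ) + 2 ≤ j → Commute (x i) (x j))
  (hadj : ∀ i j : Fin m, (j : ℕ) = i + 1 → x j * x i = c * x i * x j)

include hc hcx hsq hfar hadj in
lemma lift_rels : ∀ r ∈ Erel m ν, FreeGroup.lift (fun t => t.elim c x) r = 1 := by
  rintro r ((((rfl | ⟨i, rfl⟩) | ⟨i, rfl⟩) | ⟨i, j, hij, rfl⟩) | ⟨i, j, hij, rfl⟩)
  · simpa using hc
  · simp [(hcx i).eq]
  · split_ifs with hν <;> simp [hsq i, hν]
  · simp [(hfar i j hij).eq]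
  · rw [map_mul, map_inv, mul_inv_eq_one]
    simpa using hadj i j hij

def lift : Egrp m ν →* G := PresentedGroup.toGroup (lift_rels c x hc hcx hsq hfar hadj)

@[simp] lemma lift_neg1 : lift c x hc hcx hsq hfar hadj (neg1 m ν) = c :=
  PresentedGroup.toGroup.of _

@[simp] lemma lift_xgen (i : Fin m) : lift c x hc hcx hsq hfar hadj (xgen m ν i) = x i :=
  PresentedGroup.toGroup.of _

end lift

lemma neg1_sq : neg1 m ν ^ 2 = 1 :=
  PresentedGroup.one_of_mem (by simp [Erel])

lemma commute_neg1_xgen (i : Fin m) : Commute (neg1 m ν) (xgen m ν i) := by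
  have h := PresentedGroup.one_of_mem (rels := Erel m ν)
    (by left; left; left; right; exact ⟨i, rfl⟩)
  simp only [map_mul, map_inv, mul_inv_eq_iff_eq_mul] at h
  exact h

lemma xgen_sq (i : Fin m) : xgen m ν i ^ 2 = if ν = 1 then 1 else neg1 m ν := by
  have h := PresentedGroup.one_of_mem (rels := Erel m ν) (by left; left; right; exact ⟨i, rfl⟩)
  rw [map_mul, map_inv, mul_inv_eq_one] at h
  split_ifs at h ⊢ <;> rw [map_pow] at h
  · rwa [map_one] at h
  · exact h

lemma commute_xgen_of_add_two_le {i j : Fin m} (hij : (i : ℕ) + 2 ≤ j) :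
    Commute (xgen m ν i) (xgen m ν j) := by
  have h := PresentedGroup.one_of_mem (rels := Erel m ν)
    (by left; right; exact ⟨i, j, hij, rfl⟩)
  simp only [map_mul, map_inv, mul_inv_eq_iff_eq_mul] at h
  exact h

lemma xgen_succ_mul_xgen {i j : Fin m} (hij : (j : ℕ) = i + 1) :
    xgen m ν j * xgen m ν i = neg1 m ν * xgen m ν i * xgen m ν j := by
  have h := PresentedGroup.one_of_mem (rels := Erel m ν) (by right; exact ⟨i, j, hij, rfl⟩)
  rw [map_mul, map_inv, mul_inv_eq_one] at h
  exact h

lemma neg1_pow_val_add (a b : ZMod 2) :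
    neg1 m ν ^ (a + b).val = neg1 m ν ^ a.val * neg1 m ν ^ b.val :=
  pow_val_add_of_pow_eq_one neg1_sq a b

local notation "M" => cocycleMatrix m ν

lemma xgen_mul_self (i : Fin m) : xgen m ν i * xgen m ν i = neg1 m ν ^ (M i i).val := by
  rw [← pow_two, xgen_sq]
  split_ifs with hν <;> simp [cocycleMatrix, nuBit, hν, ZMod.val_one]

lemma xgen_mul_xgen_of_lt {i j : Fin m} (hji : j < i) :
    xgen m ν i * xgen m ν j = neg1 m ν ^ (M i j).val * xgen m ν j * xgen m ν i := by
  have hne : i ≠ j := hji.ne'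
  rw [Fin.lt_def] at hji
  by_cases hij : (i : ℕ) = j + 1
  · simpa [cocycleMatrix, hij, hne, ZMod.val_one] using xgen_succ_mul_xgen hij
  · simpa [cocycleMatrix, hij, hne] using (commute_xgen_of_add_two_le (ν := ν) (by omega)).eq.symm

lemma xgen_mul_xgen_pow_of_lt {i j : Fin m} (hji : j < i) (a : ZMod 2) :
    xgen m ν i * xgen m ν j ^ a.val =
      neg1 m ν ^ (M i j * a).val * xgen m ν j ^ a.val * xgen m ν i := by
  rcases a.eq_zero_or_eq_one_of_two with rfl | rfl
  · simp
  · simpa [ZMod.val_one] using xgen_mul_xgen_of_lt hji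

lemma xgen_mul_xgen_pow (i : Fin m) (a : ZMod 2) :
    xgen m ν i * xgen m ν i ^ a.val =
      neg1 m ν ^ (M i i * a).val * xgen m ν i ^ (1 + a).val := by
  rcases a.eq_zero_or_eq_one_of_two with rfl | rfl
  · simp [ZMod.val_one]
  · simpa [ZMod.val_one, show (1 + 1 : ZMod 2) = 0 from rfl] using xgen_mul_self i

def xprod (l : List (Fin m)) (v : Fin m → ZMod 2) : Egrp m ν :=
  (l.map fun j => xgen m ν j ^ (v j).val).prod

lemma xprod_cons (j : Fin m) (l : List (Fin m)) (v : Fin m → ZMod 2) :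
    xprod (ν := ν) (j :: l) v = xgen m ν j ^ (v j).val * xprod l v := by
  simp [xprod]

lemma xprod_congr {l : List (Fin m)} {v w : Fin m → ZMod 2} (h : ∀ j ∈ l, v j = w j) :
    xprod (ν := ν) l v = xprod l w := by
  simp only [xprod]
  rw [List.map_congr_left fun j hj => by rw [h j hj]]

/-- `xᵢ` moves past each `xⱼ`, `j < i`, at the cost `(-1)^(M i j)` and merges with `xᵢ^(vᵢ)`;
the entries `M i j` with `j > i` vanish, so the exponent can be summed over all of `l`. -/
lemma xgen_mul_xprod {i : Fin m} {l : List (Fin m)} (hl : l.Pairwise (· < ·)) (hi : i ∈ l)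
    (v : Fin m → ZMod 2) :
    xgen m ν i * xprod l v =
      neg1 m ν ^ (l.map fun j => M i j * v j).sum.val * xprod l (Pi.single i 1 + v) := by
  induction l with
  | nil => simp at hi
  | cons j l ih =>
    rw [List.pairwise_cons] at hl
    rw [xprod_cons, xprod_cons, ← mul_assoc, List.map_cons, List.sum_cons]
    rcases List.mem_cons.mp hi with rfl | hi
    · have hrest : ∀ k ∈ l, v k = (Pi.single i 1 + v : Fin m → ZMod 2) k := fun k hk => by
        simp [(hl.1 k hk).ne']
      have hzero : (l.map fun k => M i k * v k).sum = 0 :=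
        List.sum_eq_zero <| by
          simpa using fun k hk => Or.inl (cocycleMatrix_apply_of_lt (hl.1 k hk))
      rw [xgen_mul_xgen_pow, xprod_congr hrest, hzero, add_zero, mul_assoc]
      simp
    · have hji : j < i := hl.1 i hi
      have hj : (Pi.single i 1 + v : Fin m → ZMod 2) j = v j := by simp [hji.ne]
      rw [xgen_mul_xgen_pow_of_lt hji, mul_assoc, ih hl.2 hi, neg1_pow_val_add, hj]
      simp only [mul_assoc]
      rw [← mul_assoc (xgen m ν j ^ _), ← ((commute_neg1_xgen j).pow_pow _ _).eq, mul_assoc]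

lemma xgen_mul_xprod_finRange (i : Fin m) (v : Fin m → ZMod 2) :
    xgen m ν i * xprod (List.finRange m) v =
      neg1 m ν ^ ((M *ᵥ v) i).val * xprod (List.finRange m) (Pi.single i 1 + v) := by
  rw [xgen_mul_xprod (List.pairwise_lt_finRange m) (List.mem_finRange i), Matrix.mulVec,
    dotProduct, Fin.sum_univ_def]

open Emodel

def toModel : Egrp m ν →* Emodel m ν :=
  lift negOne gen negOne_sq (fun _ => commute_negOne _) gen_sq
    (fun _ _ => commute_gen_of_add_two_le) (fun _ _ => gen_succ_mul_gen)

@[simp] lemma toModel_neg1 : toModel (neg1 m ν) = negOne := lift_neg1 ..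

@[simp] lemma toModel_xgen (i : Fin m) : toModel (xgen m ν i) = gen i := lift_xgen ..

lemma toModel_xgen_pow (i : Fin m) (a : ZMod 2) :
    toModel (xgen m ν i ^ a.val) = ⟨0, Pi.single i a⟩ := by
  rcases a.eq_zero_or_eq_one_of_two with rfl | rfl
  · ext <;> simp
  · simp [ZMod.val_one, gen]

lemma toModel_xprod {l : List (Fin m)} (hl : l.Pairwise (· < ·)) (v : Fin m → ZMod 2) :
    toModel (xprod (ν := ν) l v) = ⟨0, (l.map fun j => Pi.single j (v j)).sum⟩ := by
  rw [xprod, map_list_prod, List.map_map]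
  simp only [Function.comp_def, toModel_xgen_pow]
  rw [← TwistedProd.list_prod_map_mk_zero, List.map_map]
  · rfl
  · rw [List.pairwise_map]
    exact hl.imp fun hjk => by simp [form_single_single, cocycleMatrix_apply_of_lt hjk]

lemma toModel_xprod_finRange (v : Fin m → ZMod 2) :
    toModel (xprod (ν := ν) (List.finRange m) v) = ⟨0, v⟩ := by
  rw [toModel_xprod (List.pairwise_lt_finRange m), ← Fin.sum_univ_def, Finset.univ_sum_single]

def ofModel (a : Emodel m ν) : Egrp m ν := neg1 m ν ^ a.s.val * xprod (List.finRange m) a.v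

lemma toModel_ofModel (a : Emodel m ν) : toModel (ofModel a) = a := by
  rw [ofModel, map_mul, map_pow, toModel_neg1, negOne, TwistedProd.mk_zero_pow,
    toModel_xprod_finRange]
  ext <;> simp

lemma ofModel_toModel : Function.LeftInverse ofModel (toModel (m := m) (ν := ν)) := by
  refine PresentedGroup.leftInverse_of_map_of_mul _ _ (by simp [ofModel, xprod]) ?_
  rintro (_ | i) a
  · change ofModel (toModel (neg1 m ν) * a) = neg1 m ν * ofModel a
    rw [toModel_neg1, negOne_mul, ofModel, ofModel, neg1_pow_val_add, ZMod.val_one, pow_one,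
      mul_assoc]
  · change ofModel (toModel (xgen m ν i) * a) = xgen m ν i * ofModel a
    rw [toModel_xgen, gen_mul, ofModel, ofModel, neg1_pow_val_add, mul_assoc,
      ← xgen_mul_xprod_finRange, ← mul_assoc, ← mul_assoc,
      ((commute_neg1_xgen i).pow_left _).eq]

def equivModel : Egrp m ν ≃* Emodel m ν where
  toFun := toModel
  invFun := ofModel
  left_inv := ofModel_toModel
  right_inv := toModel_ofModel
  map_mul' := map_mul toModel

lemma zel_eq_xprod : zel m ν = xprod (List.finRange m) (altVec m) := by
  simp only [zel, xprod, altVec]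
  congr 1
  refine List.map_congr_left fun j _ => ?_
  split_ifs <;> simp [ZMod.val_one]

lemma toModel_zel : toModel (zel m ν) = ⟨0, altVec m⟩ := by
  rw [zel_eq_xprod, toModel_xprod_finRange]

lemma mem_center_iff {g : Egrp m ν} :
    g ∈ Subgroup.center (Egrp m ν) ↔ toModel g ∈ Subgroup.center (Emodel m ν) := by
  rw [← SetLike.mem_coe, ← SetLike.mem_coe, Subgroup.coe_center, Subgroup.coe_center]
  exact (MulEquivClass.apply_mem_center_iff equivModel).symm

end Egrp

/-- the center of `E_m^ν` is `{±1}` for `m` even and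
`{±1, ±x₁x₃⋯x_m}` for `m` odd. -/
theorem stmt12 (m : ℕ) (ν : ℤˣ) :
    (Subgroup.center (Egrp m ν) : Set (Egrp m ν)) =
      if m % 2 = 0 then {1, neg1 m ν}
      else {1, neg1 m ν, zel m ν, neg1 m ν * zel m ν} := by
  ext g
  obtain ⟨a, rfl⟩ := Egrp.ofModel_toModel.surjective g
  have hinj (x : Egrp m ν) : Egrp.ofModel a = x ↔ a = Egrp.toModel x :=
    ⟨fun h => h ▸ (Egrp.toModel_ofModel a).symm, fun h => h ▸ Egrp.ofModel_toModel x⟩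
  rw [SetLike.mem_coe, Egrp.mem_center_iff, Egrp.toModel_ofModel, Emodel.mem_center_iff]
  rcases a with ⟨s, v⟩
  rcases Nat.mod_two_eq_zero_or_one m with hm | hm <;>
  rcases s.eq_zero_or_eq_one_of_two with rfl | rfl <;>
  simp [hm, hinj, Egrp.toModel_zel, Emodel.negOne, TwistedProd.ext_iff]
end

section
/- Let P_n = (P_s ⊗ P_{σₓ})^{⊗⌊n/2⌋} ⊗ I₂^{⊗(n−2⌊n/2⌋)} with P_s = [[1,i],[i,1]] and P_{σₓ} = [[1,-1],[1,1]]. Then P_n⁻¹ g_{2i+1} P_n = i·(I₂^{⊗2i} ⊗ σ_z ⊗ σ_z ⊗ I₂^{⊗(n−2i−2)}) and P_n⁻¹ g_{2i} P_n = g_{2i}, where gⱼ = I₂^{⊗(j−1)} ⊗ R² ⊗ I₂^{⊗(n−j−1)}. -/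
open Matrix Complex

/-- The operator `I₂^{⊗ j} ⊗ M ⊗ I₂^{⊗ (n-j-1)}` acting on `(ℂ²)^{⊗ n}`
(0-indexed: `M` acts on tensor factor `j`). -/
noncomputable def oneOp (n j : ℕ) (M : Matrix (Fin 2) (Fin 2) ℂ) :
    Matrix (Fin n → Fin 2) (Fin n → Fin 2) ℂ :=
  if h : j < n then fun x y =>
    M (x ⟨j, h⟩) (y ⟨j, h⟩) *
      ∏ l : Fin n, if (l : ℕ) = j then 1 else if x l = y l then 1 else 0
  else 0

noncomputable def Ps : Matrix (Fin 2) (Fin 2) ℂ := !![1, Complex.I; Complex.I, 1]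

def Px : Matrix (Fin 2) (Fin 2) ℂ := !![1, -1; 1, 1]

def sigmaZ : Matrix (Fin 2) (Fin 2) ℂ := !![1, 0; 0, -1]

/-- `Pₙ = (P_s ⊗ P_{σₓ})^{⊗⌊n/2⌋} ⊗ I₂^{⊗(n−2⌊n/2⌋)}`: `P_s` on odd (1-indexed)
tensor slots, `P_{σₓ}` on even slots, identity on the last slot if `n` is odd. -/
noncomputable def Pn (n : ℕ) : Matrix (Fin n → Fin 2) (Fin n → Fin 2) ℂ :=
  fun x y => ∏ j : Fin n,
    if (j : ℕ) % 2 = 1 then Px (x j) (y j)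
    else if (j : ℕ) + 1 < n then Ps (x j) (y j)
    else if x j = y j then 1 else 0

/-!
Every operator in the statement is a Kronecker product of `2 × 2` site matrices, `R²` included
(`R² = iσ_y ⊗ σ_x`), so conjugation by `Pₙ` acts site by site. On the sites `2i, 2i+1` one has
`P_s⁻¹ (iσ_y) P_s = i σ_z` and `P_{σₓ}⁻¹ σ_x P_{σₓ} = σ_z`; on the sites `2i-1, 2i` the factor
`P_{σₓ} = 1 - iσ_y` commutes with `iσ_y`, and `P_s = 1 + iσ_x` (or `I₂` on a trailing slot)
commutes with `σ_x`.
-/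

open scoped Kronecker

namespace Matrix

variable {ι α R : Type*} [Fintype ι]

section CommSemiring

variable [CommSemiring R]

def kroneckerPi (P : ι → Matrix α α R) : Matrix (ι → α) (ι → α) R :=
  of fun x y => ∏ j, P j (x j) (y j)

@[simp]
theorem kroneckerPi_apply (P : ι → Matrix α α R) (x y : ι → α) :
    kroneckerPi P x y = ∏ j, P j (x j) (y j) := rfl

theorem kroneckerPi_mul [DecidableEq ι] [Fintype α] (P Q : ι → Matrix α α R) :
    kroneckerPi P * kroneckerPi Q = kroneckerPi (P * Q) := by
  ext x y
  simp only [mul_apply, kroneckerPi_apply, Pi.mul_apply, Fintype.prod_sum,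
    Finset.prod_mul_distrib]

theorem kroneckerPi_one [DecidableEq α] : kroneckerPi (1 : ι → Matrix α α R) = 1 := by
  ext x y
  simp [one_apply, Fintype.prod_boole, funext_iff]

end CommSemiring

variable [DecidableEq ι] [Fintype α] [DecidableEq α] [CommRing R]

theorem inv_kroneckerPi {P : ι → Matrix α α R} (hP : ∀ j, IsUnit (P j).det) :
    (kroneckerPi P)⁻¹ = kroneckerPi P⁻¹ := by
  refine inv_eq_left_inv ?_
  rw [kroneckerPi_mul, ← kroneckerPi_one]
  congr 1
  funext j
  exact nonsing_inv_mul _ (hP j)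

theorem inv_kroneckerPi_mul_kroneckerPi_mul_kroneckerPi {P G H : ι → Matrix α α R}
    (hP : ∀ j, IsUnit (P j).det) (hPHG : SemiconjBy P H G) :
    (kroneckerPi P)⁻¹ * kroneckerPi G * kroneckerPi P = kroneckerPi H := by
  rw [inv_kroneckerPi hP, kroneckerPi_mul, kroneckerPi_mul]
  congr 1
  funext j
  rw [Pi.mul_apply, Pi.mul_apply, mul_assoc, ← Pi.semiconjBy_iff.mp hPHG j, ← mul_assoc,
    Pi.inv_apply, nonsing_inv_mul _ (hP j), one_mul]

end Matrix

theorem Pi.semiconjBy_mulSingle {ι M : Type*} [DecidableEq ι] [Monoid M] {P : ι → M} {p : ι}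
    {A' A : M} (h : SemiconjBy (P p) A' A) :
    SemiconjBy P (Pi.mulSingle p A') (Pi.mulSingle p A) := by
  refine SemiconjBy.pi fun l => ?_
  by_cases hl : l = p
  · subst hl; simp [h]
  · simp [Pi.mulSingle_eq_of_ne hl]

theorem oneOp_eq_kroneckerPi {n j : ℕ} (h : j < n) (M : Matrix (Fin 2) (Fin 2) ℂ) :
    oneOp n j M = kroneckerPi (Pi.mulSingle ⟨j, h⟩ M) := by
  ext x y
  have hsite : ∀ l : Fin n, (Pi.mulSingle ⟨j, h⟩ M : Fin n → Matrix _ _ ℂ) l (x l) (y l) =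
      (if l = ⟨j, h⟩ then M (x l) (y l) else 1) *
        if (l : ℕ) = j then 1 else if x l = y l then 1 else 0 := by
    intro l
    by_cases hl : l = ⟨j, h⟩
    · subst hl; simp
    · simp [hl, Fin.ext_iff.not.mp hl, one_apply]
  simp only [oneOp, h, ↓reduceDIte, kroneckerPi_apply, hsite, Finset.prod_mul_distrib,
    Finset.prod_ite_eq', Finset.mem_univ, if_true]

theorem pairOp_kronecker_eq_kroneckerPi {n j : ℕ} (h : j + 1 < n)
    (A B : Matrix (Fin 2) (Fin 2) ℂ) :
    pairOp n j (A ⊗ₖ B) =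
      kroneckerPi (Pi.mulSingle ⟨j, by omega⟩ A * Pi.mulSingle ⟨j + 1, h⟩ B) := by
  ext x y
  have hsite : ∀ l : Fin n,
      (Pi.mulSingle ⟨j, by omega⟩ A * Pi.mulSingle ⟨j + 1, h⟩ B : Fin n → Matrix _ _ ℂ) l
        (x l) (y l) =
      (if l = ⟨j, by omega⟩ then A (x l) (y l) else 1) *
        (if l = ⟨j + 1, h⟩ then B (x l) (y l) else 1) *
          if (l : ℕ) = j ∨ (l : ℕ) = j + 1 then 1 else if x l = y l then 1 else 0 := by
    rintro ⟨l, hl⟩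
    by_cases hlj : l = j
    · subst hlj; simp
    by_cases hlj' : l = j + 1
    · subst hlj'; simp
    · simp [hlj, hlj', one_apply]
  simp only [pairOp, h, ↓reduceDIte, kroneckerPi_apply, hsite, Finset.prod_mul_distrib,
    Finset.prod_ite_eq', Finset.mem_univ, if_true, kroneckerMap_apply, mul_assoc]

theorem oneOp_smul (n j : ℕ) (c : ℂ) (M : Matrix (Fin 2) (Fin 2) ℂ) :
    oneOp n j (c • M) = c • oneOp n j M := by
  by_cases h : j < n
  · ext x y
    simp only [oneOp, h, ↓reduceDIte, Matrix.smul_apply, smul_eq_mul, mul_assoc]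
    rfl
  · simp [oneOp, h]

theorem R_mul_R_s19 : R * R = !![0, 1; -1, 0] ⊗ₖ !![0, 1; 1, 0] := by
  have hsqrt : ((Real.sqrt 2 : ℝ) : ℂ) ^ 2 = 2 := by
    rw [← Complex.ofReal_pow, Real.sq_sqrt zero_le_two]; norm_num
  ext ⟨a, b⟩ ⟨c, d⟩
  simp only [mul_apply, Fintype.sum_prod_type, Fin.sum_univ_two, R, R4, Matrix.smul_apply]
  fin_cases a <;> fin_cases b <;> fin_cases c <;> fin_cases d <;>
    simp <;> ring_nf <;> simp [hsqrt]

theorem semiconjBy_Ps : SemiconjBy Ps (I • sigmaZ) !![0, 1; -1, 0] := by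
  simp [SemiconjBy, Ps, sigmaZ]

theorem semiconjBy_Px : SemiconjBy Px sigmaZ !![0, 1; 1, 0] := by
  simp [SemiconjBy, Px, sigmaZ]

theorem commute_Px : Commute Px !![0, 1; -1, 0] := by
  simp [Commute, SemiconjBy, Px]

theorem commute_Ps : Commute Ps !![0, 1; 1, 0] := by
  simp [Commute, SemiconjBy, Ps]

noncomputable def PnFactor (n j : ℕ) : Matrix (Fin 2) (Fin 2) ℂ :=
  if j % 2 = 1 then Px else if j + 1 < n then Ps else 1

theorem Pn_eq_kroneckerPi (n : ℕ) : Pn n = kroneckerPi fun j : Fin n => PnFactor n j := by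
  ext x y
  refine Finset.prod_congr rfl fun j _ => ?_
  simp only [PnFactor]
  split_ifs <;> simp_all [one_apply]

theorem isUnit_det_PnFactor (n j : ℕ) : IsUnit (PnFactor n j).det := by
  unfold PnFactor
  split_ifs <;> simp [Px, Ps, det_fin_two]

theorem PnFactor_of_odd {n j : ℕ} (hj : j % 2 = 1) : PnFactor n j = Px := by
  simp [PnFactor, hj]

theorem PnFactor_of_even {n j : ℕ} (hj : j % 2 = 0) (hn : j + 1 < n) : PnFactor n j = Ps := by
  simp [PnFactor, hj, hn]

theorem commute_PnFactor_of_even {n j : ℕ} (hj : j % 2 = 0) :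
    Commute (PnFactor n j) !![0, 1; 1, 0] := by
  rw [PnFactor, if_neg (by omega)]
  split_ifs
  · exact commute_Ps
  · exact Commute.one_left _

/-- `Pₙ⁻¹ g_{2i+1} Pₙ = i·(I₂^{⊗2i} ⊗ σ_z ⊗ σ_z ⊗ I₂^{⊗(n−2i−2)})`
and `Pₙ⁻¹ g_{2i} Pₙ = g_{2i}` (paper's 1-indexed `g_j` is `gMat n (j-1)`; the index
conditions are `1 ≤ 2i+1 ≤ n−1` and `1 ≤ 2i ≤ n−1`). -/
theorem stmt19 (n i : ℕ) :
    (2 * i + 1 ≤ n - 1 →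
      (Pn n)⁻¹ * gMat n (2 * i) * Pn n =
        Complex.I • (oneOp n (2 * i) sigmaZ * oneOp n (2 * i + 1) sigmaZ)) ∧
    (1 ≤ 2 * i ∧ 2 * i ≤ n - 1 →
      (Pn n)⁻¹ * gMat n (2 * i - 1) * Pn n = gMat n (2 * i - 1)) := by
  constructor
  · intro h
    have hn : 2 * i + 1 < n := by omega
    rw [← smul_mul_assoc, ← oneOp_smul, oneOp_eq_kroneckerPi (by omega), oneOp_eq_kroneckerPi hn,
      kroneckerPi_mul, gMat, R_mul_R_s19, pairOp_kronecker_eq_kroneckerPi hn, Pn_eq_kroneckerPi]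
    refine inv_kroneckerPi_mul_kroneckerPi_mul_kroneckerPi (fun _ => isUnit_det_PnFactor _ _)
      ((Pi.semiconjBy_mulSingle ?_).mul_right (Pi.semiconjBy_mulSingle ?_))
    · rw [PnFactor_of_even (j := 2 * i) (by omega) (by omega)]; exact semiconjBy_Ps
    · rw [PnFactor_of_odd (j := 2 * i + 1) (by omega)]; exact semiconjBy_Px
  · rintro ⟨hi, h⟩
    have hn : 2 * i - 1 + 1 < n := by omega
    rw [gMat, R_mul_R_s19, pairOp_kronecker_eq_kroneckerPi hn, Pn_eq_kroneckerPi]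
    refine inv_kroneckerPi_mul_kroneckerPi_mul_kroneckerPi (fun _ => isUnit_det_PnFactor _ _)
      ((Pi.semiconjBy_mulSingle ?_).mul_right (Pi.semiconjBy_mulSingle ?_))
    · rw [PnFactor_of_odd (j := 2 * i - 1) (by omega)]; exact commute_Px
    · exact commute_PnFactor_of_even (j := 2 * i - 1 + 1) (by omega)
end
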